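/- Under the finite-population sampling setup, if additionally 1/π_i ≤ γ for all i = 1, …, N (for some γ ≥ 1), then Cov(√N T) ⪯ γ J in the Loewner order, i.e., γ·(1/N)∑_{i=1}^N E[Y_i Y_iᵀ] − Cov(√N T) is positive semidefinite; consequently Cov(−H⁻¹ √N T) ⪯ γ H⁻¹ J H⁻¹. -/

import Mathlib

open MeasureTheory ProbabilityTheory Matrix

/-- Entrywise covariance matrix `Cov(Z) = E[(Z − E Z)(Z − E Z)ᵀ]` of a random vector. -/
noncomputable def covMatrix {Ω : Type*} [MeasurableSpace Ω] (μ : Measure Ω) {d : ℕ}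
    (Z : Ω → Fin d → ℝ) : Matrix (Fin d) (Fin d) ℝ :=
  Matrix.of fun a b =>
    ∫ ω, (Z ω a - ∫ ω', Z ω' a ∂μ) * (Z ω b - ∫ ω', Z ω' b ∂μ) ∂μ

/-- Second-moment (outer-product) matrix `E[Y Yᵀ]` of a random vector. -/
noncomputable def outerExpect {Ω : Type*} [MeasurableSpace Ω] (μ : Measure Ω) {d : ℕ}
    (Y : Ω → Fin d → ℝ) : Matrix (Fin d) (Fin d) ℝ :=
  Matrix.of fun a b => ∫ ω, Y ω a * Y ω b ∂μ

/-!
Conditioning on `𝒜 = σ(Y₁, …, Y_N)` pulls out the `𝒜`-measurable factors: for `Xᵢ = vᵀ Yᵢ`,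
`E[δᵢ δⱼ Xᵢ Xⱼ] = πᵢⱼ E[Xᵢ] E[Xⱼ] = 0` for `i ≠ j`, while `δᵢ² = δᵢ` gives
`E[δᵢ Xᵢ²] = πᵢ E[Xᵢ²]`. Hence `vᵀ Cov(√N T) v = N⁻¹ ∑ πᵢ⁻¹ E[Xᵢ²] ≤ γ vᵀ J v`.
The bound for `−H⁻¹ √N T` is its congruence by `H⁻¹`, as `Cov(A Z) = A Cov(Z) Aᵀ`.
-/

section Moments

variable {Ω : Type*} [MeasurableSpace Ω] {μ : Measure Ω} {d : ℕ}

lemma outerExpect_isHermitian (Y : Ω → Fin d → ℝ) : (outerExpect μ Y).IsHermitian :=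
  Matrix.ext fun a b => by
    simp only [conjTranspose_apply, star_trivial, outerExpect, of_apply, mul_comm]

lemma covMatrix_eq_outerExpect_sub (Z : Ω → Fin d → ℝ) :
    covMatrix μ Z = outerExpect μ (fun ω => Z ω - fun a => ∫ ω', Z ω' a ∂μ) :=
  rfl

lemma covMatrix_isHermitian (Z : Ω → Fin d → ℝ) : (covMatrix μ Z).IsHermitian :=
  outerExpect_isHermitian _

lemma covMatrix_eq_outerExpect_of_integral_eq_zero {Z : Ω → Fin d → ℝ}
    (hZ : ∀ a, ∫ ω, Z ω a ∂μ = 0) : covMatrix μ Z = outerExpect μ Z := by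
  ext a b
  simp only [covMatrix, outerExpect, of_apply, hZ, sub_zero]

lemma covMatrix_smul (c : ℝ) (Z : Ω → Fin d → ℝ) :
    covMatrix μ (fun ω => c • Z ω) = c ^ 2 • covMatrix μ Z := by
  ext a b
  simp only [covMatrix, of_apply, Matrix.smul_apply, Pi.smul_apply, smul_eq_mul,
    integral_const_mul, ← mul_sub]
  rw [← integral_const_mul]
  congr 1 with ω
  ring

lemma MeasureTheory.MemLp.const_dotProduct {p : ENNReal} {Y : Ω → Fin d → ℝ} (hY : MemLp Y p μ)
    (v : Fin d → ℝ) : MemLp (fun ω => v ⬝ᵥ Y ω) p μ :=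
  memLp_finsetSum _ fun a _ => (hY.eval a).const_mul (v a)

lemma integral_dotProduct {Y : Ω → Fin d → ℝ} (hY : Integrable Y μ) (v : Fin d → ℝ) :
    ∫ ω, v ⬝ᵥ Y ω ∂μ = v ⬝ᵥ fun a => ∫ ω, Y ω a ∂μ := by
  simp only [dotProduct]
  rw [integral_finsetSum _ fun a _ => (hY.eval a).const_mul (v a)]
  simp_rw [integral_const_mul]

lemma dotProduct_outerExpect_mulVec {Y : Ω → Fin d → ℝ} (hY : MemLp Y 2 μ)
    (v w : Fin d → ℝ) :
    v ⬝ᵥ outerExpect μ Y *ᵥ w = ∫ ω, (v ⬝ᵥ Y ω) * (w ⬝ᵥ Y ω) ∂μ := by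
  have hint : ∀ a b, Integrable (fun ω => v a * Y ω a * (w b * Y ω b)) μ := fun a b =>
    (((hY.eval a).integrable_mul (hY.eval b)).const_mul (v a * w b)).congr
      (ae_of_all _ fun ω => by simp only [Pi.mul_apply]; ring)
  simp_rw [dotProduct, Finset.sum_mul_sum]
  rw [integral_finsetSum _ fun a _ => integrable_finsetSum _ fun b _ => hint a b]
  refine Finset.sum_congr rfl fun a _ => ?_
  rw [integral_finsetSum _ fun b _ => hint a b, mulVec, dotProduct, Finset.mul_sum]
  refine Finset.sum_congr rfl fun b _ => ?_
  rw [outerExpect, of_apply, ← integral_mul_const, ← integral_const_mul]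
  congr 1 with ω
  ring

lemma outerExpect_mulVec {k : ℕ} {Y : Ω → Fin d → ℝ} (hY : MemLp Y 2 μ)
    (A : Matrix (Fin k) (Fin d) ℝ) :
    outerExpect μ (fun ω => A *ᵥ Y ω) = A * outerExpect μ Y * Aᵀ := by
  ext a b
  calc outerExpect μ (fun ω => A *ᵥ Y ω) a b = A a ⬝ᵥ outerExpect μ Y *ᵥ A b :=
        (dotProduct_outerExpect_mulVec hY _ _).symm
    _ = (A * outerExpect μ Y * Aᵀ) a b := by
        rw [Matrix.mul_assoc, mul_apply, dotProduct]
        simp [mulVec, dotProduct, mul_apply]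

lemma covMatrix_mulVec [IsFiniteMeasure μ] {k : ℕ} {Z : Ω → Fin d → ℝ} (hZ : MemLp Z 2 μ)
    (A : Matrix (Fin k) (Fin d) ℝ) :
    covMatrix μ (fun ω => A *ᵥ Z ω) = A * covMatrix μ Z * Aᵀ := by
  have hmean : (fun a => ∫ ω, (A *ᵥ Z ω) a ∂μ) = A *ᵥ fun c => ∫ ω, Z ω c ∂μ :=
    funext fun a => integral_dotProduct (hZ.integrable one_le_two) (A a)
  simp only [covMatrix_eq_outerExpect_sub, hmean, ← mulVec_sub]
  exact outerExpect_mulVec (hZ.sub (memLp_const _)) A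

end Moments

open scoped MatrixOrder in
lemma Matrix.le_of_dotProduct_mulVec_le {n : Type*} [Fintype n]
    {A B : Matrix n n ℝ} (hA : A.IsHermitian) (hB : B.IsHermitian)
    (h : ∀ v, v ⬝ᵥ A *ᵥ v ≤ v ⬝ᵥ B *ᵥ v) : A ≤ B :=
  posSemidef_iff_dotProduct_mulVec.mpr ⟨hB.sub hA, fun v => by
    simpa only [star_trivial, sub_mulVec, dotProduct_sub, sub_nonneg] using h v⟩

lemma MeasureTheory.integral_mul_of_condExp_eq_const {Ω : Type*} {m m0 : MeasurableSpace Ω}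
    {μ : Measure Ω} (hm : m ≤ m0) [SigmaFinite (μ.trim hm)] {f g : Ω → ℝ} {c : ℝ}
    (hf : StronglyMeasurable[m] f) (hgf : Integrable (fun ω => g ω * f ω) μ)
    (hg : Integrable g μ) (hgc : μ[g|m] =ᵐ[μ] fun _ => c) :
    ∫ ω, g ω * f ω ∂μ = c * ∫ ω, f ω ∂μ := by
  have hpull : μ[g * f|m] =ᵐ[μ] fun ω => c * f ω :=
    (condExp_mul_of_stronglyMeasurable_right hf hgf hg).trans
      (hgc.mono fun ω hω => by rw [Pi.mul_apply, hω])
  calc ∫ ω, g ω * f ω ∂μ = ∫ ω, (μ[g * f|m]) ω ∂μ := (integral_condExp hm).symm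
    _ = c * ∫ ω, f ω ∂μ := by rw [integral_congr_ae hpull, integral_const_mul]

lemma MeasureTheory.memLp_top_of_zero_or_one {Ω : Type*} [MeasurableSpace Ω] {μ : Measure Ω}
    {g : Ω → ℝ} (hg : Measurable g) (h01 : ∀ ω, g ω = 0 ∨ g ω = 1) : MemLp g ⊤ μ :=
  memLp_top_of_bound hg.aestronglyMeasurable 1
    (ae_of_all _ fun ω => by rcases h01 ω with h | h <;> simp [h])

noncomputable def horvitzThompsonSum {ι Ω E : Type*} [Fintype ι] [AddCommMonoid E] [Module ℝ E]
    (π : ι → ℝ) (δ : ι → Ω → ℝ) (Y : ι → Ω → E) (ω : Ω) : E :=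
  ∑ i, (δ i ω / π i) • Y i ω

section HorvitzThompson

variable {ι Ω : Type*} [Fintype ι] {m m0 : MeasurableSpace Ω} {μ : Measure Ω}
  {π : ι → ℝ} {π₂ : ι → ι → ℝ} {δ : ι → Ω → ℝ}

lemma horvitzThompsonSum_apply {d : ℕ} (Y : ι → Ω → Fin d → ℝ) (ω : Ω) (a : Fin d) :
    horvitzThompsonSum π δ Y ω a = horvitzThompsonSum π δ (fun i ω => Y i ω a) ω := by
  simp [horvitzThompsonSum, Finset.sum_apply]

lemma dotProduct_horvitzThompsonSum {d : ℕ} (Y : ι → Ω → Fin d → ℝ) (ω : Ω) (v : Fin d → ℝ) :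
    v ⬝ᵥ horvitzThompsonSum π δ Y ω = horvitzThompsonSum π δ (fun i ω => v ⬝ᵥ Y i ω) ω := by
  simp [horvitzThompsonSum, dotProduct_sum, dotProduct_smul]

lemma MeasureTheory.MemLp.horvitzThompsonSum {E : Type*} [NormedAddCommGroup E]
    [NormedSpace ℝ E] {p : ENNReal} {Y : ι → Ω → E} (hY : ∀ i, MemLp (Y i) p μ)
    (hδm : ∀ i, Measurable (δ i)) (hδ01 : ∀ i ω, δ i ω = 0 ∨ δ i ω = 1) :
    MemLp (horvitzThompsonSum π δ Y) p μ :=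
  memLp_finsetSum _ fun i _ => by
    convert ((hY i).const_smul (π i)⁻¹).smul (p := ⊤) (r := p)
      (memLp_top_of_zero_or_one (hδm i) (hδ01 i)) using 1
    ext ω
    rw [Pi.smul_apply', Pi.smul_apply, smul_smul, div_eq_mul_inv]

variable [IsFiniteMeasure μ]

theorem integral_horvitzThompsonSum_eq_zero (hm : m ≤ m0) {X : ι → Ω → ℝ}
    (hXm : ∀ i, StronglyMeasurable[m] (X i)) (hX : ∀ i, Integrable (X i) μ)
    (hXmean : ∀ i, ∫ ω, X i ω ∂μ = 0)
    (hδm : ∀ i, Measurable (δ i)) (hδ01 : ∀ i ω, δ i ω = 0 ∨ δ i ω = 1)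
    (hδ : ∀ i, μ[δ i|m] =ᵐ[μ] fun _ => π i) :
    ∫ ω, horvitzThompsonSum π δ X ω ∂μ = 0 := by
  have hint : ∀ i, Integrable (fun ω => δ i ω * X i ω) μ := fun i =>
    (hX i).mul_of_top_right (memLp_top_of_zero_or_one (hδm i) (hδ01 i))
  have hterm : ∀ i, ∫ ω, (δ i ω / π i) • X i ω ∂μ = 0 := fun i => by
    simp_rw [smul_eq_mul, div_mul_eq_mul_div]
    rw [integral_div, integral_mul_of_condExp_eq_const hm (hXm i) (hint i)
      ((memLp_top_of_zero_or_one (hδm i) (hδ01 i)).integrable le_top) (hδ i), hXmean i,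
      mul_zero, zero_div]
  unfold horvitzThompsonSum
  rw [integral_finsetSum _ fun i _ => ((hint i).div_const (π i)).congr
    (ae_of_all _ fun ω => by simp only [smul_eq_mul, div_mul_eq_mul_div])]
  exact Finset.sum_eq_zero fun i _ => hterm i

theorem integral_horvitzThompsonSum_sq (hm : m ≤ m0) {X : ι → Ω → ℝ}
    (hXm : ∀ i, StronglyMeasurable[m] (X i)) (hX : ∀ i, MemLp (X i) 2 μ)
    (hXX : ∀ i j, i ≠ j → ∫ ω, X i ω * X j ω ∂μ = 0)
    (hδm : ∀ i, Measurable (δ i)) (hδ01 : ∀ i ω, δ i ω = 0 ∨ δ i ω = 1)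
    (hδ : ∀ i, μ[δ i|m] =ᵐ[μ] fun _ => π i)
    (hδδ : ∀ i j, i ≠ j → μ[fun ω => δ i ω * δ j ω|m] =ᵐ[μ] fun _ => π₂ i j) :
    ∫ ω, horvitzThompsonSum π δ X ω ^ 2 ∂μ = ∑ i, (π i)⁻¹ * ∫ ω, X i ω ^ 2 ∂μ := by
  have hδδ_top : ∀ i j, MemLp (fun ω => δ i ω * δ j ω) ⊤ μ := fun i j =>
    (memLp_top_of_zero_or_one (hδm j) (hδ01 j)).mul'
      (memLp_top_of_zero_or_one (hδm i) (hδ01 i))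
  have hint : ∀ i j, Integrable (fun ω => δ i ω * δ j ω * (X i ω * X j ω)) μ := fun i j =>
    ((hX i).integrable_mul (hX j)).mul_of_top_right (hδδ_top i j)
  have hdiag : ∀ i, ∫ ω, δ i ω * δ i ω * (X i ω * X i ω) ∂μ = π i * ∫ ω, X i ω ^ 2 ∂μ := by
    intro i
    have hδsq : (fun ω => δ i ω * δ i ω) = δ i :=
      funext fun ω => by rcases hδ01 i ω with h | h <;> simp [h]
    simp only [sq]
    exact integral_mul_of_condExp_eq_const hm (f := fun ω => X i ω * X i ω)
      ((hXm i).mul (hXm i)) (hint i i) ((hδδ_top i i).integrable le_top)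
      (by rw [hδsq]; exact hδ i)
  have hoff : ∀ i j, i ≠ j → ∫ ω, δ i ω * δ j ω * (X i ω * X j ω) ∂μ = 0 := fun i j hij => by
    rw [integral_mul_of_condExp_eq_const hm (f := fun ω => X i ω * X j ω)
      ((hXm i).mul (hXm j)) (hint i j)
      ((hδδ_top i j).integrable le_top) (hδδ i j hij), hXX i j hij, mul_zero]
  have hexpand : ∀ ω, horvitzThompsonSum π δ X ω ^ 2
      = ∑ i, ∑ j, (π i)⁻¹ * (π j)⁻¹ * (δ i ω * δ j ω * (X i ω * X j ω)) := fun ω => by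
    rw [horvitzThompsonSum, sq, Finset.sum_mul_sum]
    refine Finset.sum_congr rfl fun i _ => Finset.sum_congr rfl fun j _ => ?_
    simp only [smul_eq_mul, div_eq_mul_inv]
    ring
  simp_rw [hexpand]
  rw [integral_finsetSum _ fun i _ => integrable_finsetSum _ fun j _ => (hint i j).const_mul _]
  refine Finset.sum_congr rfl fun i _ => ?_
  rw [integral_finsetSum _ fun j _ => (hint i j).const_mul _]
  simp_rw [integral_const_mul]
  rw [Finset.sum_eq_single i (fun j _ hji => by rw [hoff i j hji.symm, mul_zero])
    (fun h => absurd (Finset.mem_univ i) h), hdiag, ← mul_assoc]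
  congr 1
  simpa only [inv_inv] using mul_self_mul_inv (π i)⁻¹

variable {d : ℕ} {Y : ι → Ω → Fin d → ℝ}

theorem dotProduct_covMatrix_horvitzThompsonSum_mulVec (hm : m ≤ m0)
    (hYm : ∀ i, Measurable[m] (Y i)) (hY : ∀ i, MemLp (Y i) 2 μ)
    (hYindep : Pairwise fun i j => IndepFun (Y i) (Y j) μ) (hYmean : ∀ i a, ∫ ω, Y i ω a ∂μ = 0)
    (hδm : ∀ i, Measurable (δ i)) (hδ01 : ∀ i ω, δ i ω = 0 ∨ δ i ω = 1)
    (hδ : ∀ i, μ[δ i|m] =ᵐ[μ] fun _ => π i)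
    (hδδ : ∀ i j, i ≠ j → μ[fun ω => δ i ω * δ j ω|m] =ᵐ[μ] fun _ => π₂ i j) (v : Fin d → ℝ) :
    v ⬝ᵥ covMatrix μ (horvitzThompsonSum π δ Y) *ᵥ v
      = ∑ i, (π i)⁻¹ * ∫ ω, (v ⬝ᵥ Y i ω) ^ 2 ∂μ := by
  have hmean : ∀ a, ∫ ω, horvitzThompsonSum π δ Y ω a ∂μ = 0 := fun a => by
    simp_rw [horvitzThompsonSum_apply]
    exact integral_horvitzThompsonSum_eq_zero hm
      (fun i => ((measurable_pi_apply a).comp (hYm i)).stronglyMeasurable)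
      (fun i => ((hY i).eval a).integrable one_le_two) (hYmean · a) hδm hδ01 hδ
  have hvY : Measurable fun y : Fin d → ℝ => v ⬝ᵥ y := by fun_prop
  have hvYmean : ∀ i, ∫ ω, v ⬝ᵥ Y i ω ∂μ = 0 := fun i => by
    simp [integral_dotProduct ((hY i).integrable one_le_two), hYmean]
  rw [covMatrix_eq_outerExpect_of_integral_eq_zero hmean,
    dotProduct_outerExpect_mulVec (MemLp.horvitzThompsonSum hY hδm hδ01)]
  simp_rw [dotProduct_horvitzThompsonSum, ← sq]
  refine integral_horvitzThompsonSum_sq hm (fun i => (hvY.comp (hYm i)).stronglyMeasurable)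
    (fun i => (hY i).const_dotProduct v) (fun i j hij => ?_) hδm hδ01 hδ hδδ
  have := ((hYindep hij).comp hvY hvY).integral_mul_eq_mul_integral
    ((hY i).const_dotProduct v).1 ((hY j).const_dotProduct v).1
  simpa [hvYmean] using this

open scoped MatrixOrder in
theorem covMatrix_horvitzThompsonSum_le (hm : m ≤ m0)
    (hYm : ∀ i, Measurable[m] (Y i)) (hY : ∀ i, MemLp (Y i) 2 μ)
    (hYindep : Pairwise fun i j => IndepFun (Y i) (Y j) μ) (hYmean : ∀ i a, ∫ ω, Y i ω a ∂μ = 0)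
    (hδm : ∀ i, Measurable (δ i)) (hδ01 : ∀ i ω, δ i ω = 0 ∨ δ i ω = 1)
    (hδ : ∀ i, μ[δ i|m] =ᵐ[μ] fun _ => π i)
    (hδδ : ∀ i j, i ≠ j → μ[fun ω => δ i ω * δ j ω|m] =ᵐ[μ] fun _ => π₂ i j)
    {γ : ℝ} (hπγ : ∀ i, (π i)⁻¹ ≤ γ) :
    covMatrix μ (horvitzThompsonSum π δ Y) ≤ γ • ∑ i, outerExpect μ (Y i) := by
  refine le_of_dotProduct_mulVec_le (covMatrix_isHermitian _)
    (IsHermitian.smul (isSelfAdjoint_sum _ fun i _ => outerExpect_isHermitian (Y i))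
      (IsSelfAdjoint.all γ)) fun v => ?_
  rw [dotProduct_covMatrix_horvitzThompsonSum_mulVec hm hYm hY hYindep hYmean hδm hδ01 hδ hδδ,
    smul_mulVec, sum_mulVec, dotProduct_smul, dotProduct_sum, smul_eq_mul, Finset.mul_sum]
  refine Finset.sum_le_sum fun i _ => ?_
  simp_rw [dotProduct_outerExpect_mulVec (hY i), ← sq]
  exact mul_le_mul_of_nonneg_right (hπγ i) (integral_nonneg fun ω => sq_nonneg _)

end HorvitzThompson

theorem pseudoMLECovarianceLoewnerBound_general
    {Ω : Type*} (𝒜 : MeasurableSpace Ω) [mΩ : MeasurableSpace Ω]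
    (μ : Measure Ω) [IsProbabilityMeasure μ]
    (N d : ℕ)
    (Y : Fin N → Ω → Fin d → ℝ)
    (hYmeas : ∀ i, Measurable[mΩ] (Y i))
    (hYL2 : ∀ i, MemLp (Y i) 2 μ)
    (hYindep : iIndepFun Y μ)
    (hYmean : ∀ i a, ∫ ω, Y i ω a ∂μ = 0)
    (h𝒜 : 𝒜 = ⨆ k, MeasurableSpace.comap (Y k) inferInstance)
    (π : Fin N → ℝ)
    (π₂ : Fin N → Fin N → ℝ)
    (δ : Fin N → Ω → ℝ)
    (hδmeas : ∀ i, Measurable[mΩ] (δ i))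
    (hδval : ∀ i ω, δ i ω = 0 ∨ δ i ω = 1)
    (hδcond : ∀ i, μ[δ i | 𝒜] =ᵐ[μ] fun _ => π i)
    (hδδcond : ∀ i j, i ≠ j →
      μ[fun ω => δ i ω * δ j ω | 𝒜] =ᵐ[μ] fun _ => π₂ i j)
    (T : Ω → Fin d → ℝ)
    (hT : T = fun ω => (N : ℝ)⁻¹ • ∑ i, (δ i ω / π i) • Y i ω)
    (γ : ℝ) (hπγ : ∀ i, (π i)⁻¹ ≤ γ)
    (H : Matrix (Fin d) (Fin d) ℝ) (hH : H.IsSymm) :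
    (γ • ((N : ℝ)⁻¹ • ∑ i, outerExpect μ (Y i))
        - covMatrix μ (fun ω => Real.sqrt N • T ω)).PosSemidef ∧
      (γ • (H⁻¹ * ((N : ℝ)⁻¹ • ∑ i, outerExpect μ (Y i)) * H⁻¹)
        - covMatrix μ (fun ω => (-(H⁻¹)).mulVec (Real.sqrt N • T ω))).PosSemidef := by
  have hm : 𝒜 ≤ mΩ := h𝒜 ▸ iSup_le fun k => (hYmeas k).comap_le
  have hY𝒜 : ∀ i, Measurable[𝒜] (Y i) := fun i =>
    Measurable.of_comap_le (h𝒜 ▸ le_iSup (fun k => MeasurableSpace.comap (Y k) inferInstance) i)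
  set c := Real.sqrt N * (N : ℝ)⁻¹
  have hZ : (fun ω => Real.sqrt N • T ω) = fun ω => c • horvitzThompsonSum π δ Y ω := by
    simp only [hT, horvitzThompsonSum, smul_smul, c]
  have hc : c ^ 2 = (N : ℝ)⁻¹ := by
    rw [mul_pow, Real.sq_sqrt (Nat.cast_nonneg N), sq, ← mul_assoc]
    simpa only [inv_inv] using inv_mul_mul_self (N : ℝ)⁻¹
  have part1 : (γ • ((N : ℝ)⁻¹ • ∑ i, outerExpect μ (Y i))
      - covMatrix μ (fun ω => Real.sqrt N • T ω)).PosSemidef := by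
    rw [hZ, covMatrix_smul, hc, smul_comm, ← smul_sub]
    exact (le_iff.mp <| covMatrix_horvitzThompsonSum_le hm hY𝒜 hYL2
      (fun i j hij => hYindep.indepFun hij) hYmean hδmeas hδval hδcond hδδcond hπγ).smul
      (by positivity)
  have hHinv : (H⁻¹)ᴴ = H⁻¹ := by
    rw [conjTranspose_eq_transpose_of_trivial, transpose_nonsing_inv, hH]
  refine ⟨part1, ?_⟩
  have hZL2 : MemLp (fun ω => Real.sqrt N • T ω) 2 μ :=
    hZ ▸ (MemLp.horvitzThompsonSum hYL2 hδmeas hδval).const_smul c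
  rw [covMatrix_mulVec hZL2, transpose_neg, neg_mul, neg_mul_neg,
    ← conjTranspose_eq_transpose_of_trivial, hHinv]
  have := part1.mul_mul_conjTranspose_same H⁻¹
  rwa [hHinv, Matrix.mul_sub, Matrix.sub_mul, Matrix.mul_smul, Matrix.smul_mul] at this

/-- under the finite-population sampling setup, if additionally `1/π i ≤ γ`
for all `i` (`γ ≥ 1`), then `Cov(√N T) ⪯ γ J` in the Loewner order, i.e.
`γ (1/N) ∑ i E[Y i Y iᵀ] − Cov(√N T)` is positive semidefinite; consequently
`Cov(−H⁻¹ √N T) ⪯ γ H⁻¹ J H⁻¹`. -/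
theorem pseudoMLECovarianceLoewnerBound
    {Ω : Type*} (𝒜 : MeasurableSpace Ω) [mΩ : MeasurableSpace Ω]
    (μ : Measure Ω) [IsProbabilityMeasure μ]
    (N d : ℕ) (hN : 0 < N)
    (Y : Fin N → Ω → Fin d → ℝ)
    (hYmeas : ∀ i, Measurable[mΩ] (Y i))
    (hYL2 : ∀ i, MemLp (Y i) 2 μ)
    (hYindep : iIndepFun Y μ)
    (hYmean : ∀ i a, ∫ ω, Y i ω a ∂μ = 0)
    (h𝒜 : 𝒜 = ⨆ k, MeasurableSpace.comap (Y k) inferInstance)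
    (π : Fin N → ℝ) (hπ : ∀ i, π i ∈ Set.Ioc (0 : ℝ) 1)
    (π₂ : Fin N → Fin N → ℝ) (hπ₂ : ∀ i j, i ≠ j → π₂ i j ∈ Set.Icc (0 : ℝ) 1)
    (δ : Fin N → Ω → ℝ)
    (hδmeas : ∀ i, Measurable[mΩ] (δ i))
    (hδval : ∀ i ω, δ i ω = 0 ∨ δ i ω = 1)
    (hδcond : ∀ i, μ[δ i | 𝒜] =ᵐ[μ] fun _ => π i)
    (hδδcond : ∀ i j, i ≠ j →
      μ[fun ω => δ i ω * δ j ω | 𝒜] =ᵐ[μ] fun _ => π₂ i j)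
    (T : Ω → Fin d → ℝ)
    (hT : T = fun ω => (N : ℝ)⁻¹ • ∑ i, (δ i ω / π i) • Y i ω)
    (γ : ℝ) (hγ : 1 ≤ γ) (hπγ : ∀ i, (π i)⁻¹ ≤ γ)
    (H : Matrix (Fin d) (Fin d) ℝ) (hH : H.IsSymm) (hHdet : IsUnit H.det) :
    (γ • ((N : ℝ)⁻¹ • ∑ i, outerExpect μ (Y i))
        - covMatrix μ (fun ω => Real.sqrt N • T ω)).PosSemidef ∧
      (γ • (H⁻¹ * ((N : ℝ)⁻¹ • ∑ i, outerExpect μ (Y i)) * H⁻¹)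
        - covMatrix μ (fun ω => (-(H⁻¹)).mulVec (Real.sqrt N • T ω))).PosSemidef :=
  pseudoMLECovarianceLoewnerBound_general 𝒜 (mΩ := mΩ) μ N d Y hYmeas hYL2 hYindep hYmean h𝒜 π π₂ δ
    hδmeas hδval hδcond hδδcond T hT γ hπγ H hH
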